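/- On the unit 2-sphere, for multi-indices a, b with |a| = |b| = l, ∫_{S²} φ₁ ⟨J∇φ^a, ∇φ^b⟩ dM = (a₁b₂ − a₂b₁) ∫ φ^{a+b−ε₂+ε₃} + (−a₁b₃ + a₃b₁) ∫ φ^{a+b+ε₂−ε₃} + (a₂b₃ − a₃b₂) ∫ φ^{a+b+2ε₁−ε₂−ε₃}, all integrals over S². -/

import Mathlib

open MeasureTheory Real
open scoped RealInnerProductSpace

noncomputable section

/-- Euclidean 3-space. -/
abbrev E3 := EuclideanSpace ℝ (Fin 3)

/-- The unit 2-sphere `S² ⊂ ℝ³` as a subset. -/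
def Sph : Set E3 := Metric.sphere (0 : E3) 1

/-- The round surface measure on the unit 2-sphere. -/
def μS : Measure (Metric.sphere (0 : E3) 1) := (volume : Measure E3).toSphere

/-- The Riemannian gradient on the unit sphere, computed extrinsically: the Euclidean
gradient of the degree-zero homogeneous extension of `F` (which is automatically
tangent to the sphere). -/
def sgrad {n : ℕ} (F : EuclideanSpace ℝ (Fin n) → ℝ) (x : EuclideanSpace ℝ (Fin n)) :
    EuclideanSpace ℝ (Fin n) :=
  gradient (fun y => F (‖y‖⁻¹ • y)) x

/-- The Euclidean Laplacian. -/
def elap {n : ℕ} (F : EuclideanSpace ℝ (Fin n) → ℝ) (x : EuclideanSpace ℝ (Fin n)) : ℝ :=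
  ∑ i, fderiv ℝ (fun y => fderiv ℝ F y (EuclideanSpace.single i 1)) x
    (EuclideanSpace.single i 1)

/-- The Laplace–Beltrami operator on the unit sphere, computed extrinsically as the
Euclidean Laplacian of the degree-zero homogeneous extension. -/
def slap {n : ℕ} (F : EuclideanSpace ℝ (Fin n) → ℝ) (x : EuclideanSpace ℝ (Fin n)) : ℝ :=
  elap (fun y => F (‖y‖⁻¹ • y)) x

/-- The Riemannian Hessian on the unit sphere, evaluated on tangent vectors `v, w`:
the derivative of the (extended, tangential) gradient field. -/
def shess {n : ℕ} (F : EuclideanSpace ℝ (Fin n) → ℝ) (x v w : EuclideanSpace ℝ (Fin n)) :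
    ℝ :=
  ⟪fderiv ℝ (sgrad F) x v, w⟫

/-- The cross product on `ℝ³`. -/
def cross3 (x v : E3) : E3 :=
  (WithLp.equiv 2 (Fin 3 → ℝ)).symm
    ![x 1 * v 2 - x 2 * v 1, x 2 * v 0 - x 0 * v 2, x 0 * v 1 - x 1 * v 0]

/-- The standard complex structure of `S²` at a point `x`: rotation by `π/2` of the
tangent plane `x^⊥`, given by `v ↦ x × v`. -/
def Jop (x v : E3) : E3 := cross3 x v

/-! The integrand is computed pointwise, with no integration by parts. On the unit sphere the
spherical gradient is the tangential part `∇F - ⟨∇F, x⟩ x` of the Euclidean gradient, and the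
normal parts drop out of `⟨x × u, w⟩`, so `φ₁ ⟨J∇φ^a, ∇φ^b⟩ = x₀ det(x, ∇φ^a, ∇φ^b)`. Expanding the
determinant with `∂ᵢφ^a = aᵢ φ^(a - εᵢ)` gives six terms, each a multiple of `aᵢ bⱼ` times a
monomial, which pair up into the three monomials of the statement; integrating is then linear. -/

section InvNormSmul

variable {E : Type*} [NormedAddCommGroup E] [InnerProductSpace ℝ E]

theorem hasFDerivAt_norm_of_ne_zero {x : E} (hx : x ≠ 0) :
    HasFDerivAt (fun y : E => ‖y‖) (‖x‖⁻¹ • innerSL ℝ x) x := by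
  have h := (hasStrictFDerivAt_norm_sq x).hasFDerivAt.sqrt (by positivity)
  simp only [Real.sqrt_sq (norm_nonneg _)] at h
  convert h using 1
  ext v
  simp only [smul_apply, coe_innerSL_apply, smul_eq_mul, one_div, mul_inv_rev,
    nsmul_eq_mul, Nat.cast_ofNat]
  field_simp

theorem hasFDerivAt_inv_norm_smul_self {x : E} (hx : ‖x‖ = 1) :
    HasFDerivAt (fun y : E => ‖y‖⁻¹ • y)
      (ContinuousLinearMap.id ℝ E - (innerSL ℝ x).smulRight x) x := by
  have hx0 : ‖x‖ ≠ 0 := by simp [hx]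
  have hinv := (hasDerivAt_inv hx0).comp_hasFDerivAt x
    (hasFDerivAt_norm_of_ne_zero (norm_ne_zero_iff.mp hx0))
  refine (hinv.smul (hasFDerivAt_id x)).congr_fderiv ?_
  ext v
  simp [hx, sub_eq_add_neg]

end InvNormSmul

theorem sgrad_eq_of_norm_eq_one {n : ℕ} {F : EuclideanSpace ℝ (Fin n) → ℝ}
    {x : EuclideanSpace ℝ (Fin n)} (hF : DifferentiableAt ℝ F x) (hx : ‖x‖ = 1) :
    sgrad F x = gradient F x - ⟪gradient F x, x⟫ • x := by
  have hFx : HasFDerivAt F (fderiv ℝ F x) (‖x‖⁻¹ • x) := by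
    simpa [hx] using hF.hasFDerivAt
  have h := HasFDerivAt.comp (g := F) (f := fun y => ‖y‖⁻¹ • y) x hFx
    (hasFDerivAt_inv_norm_smul_self hx)
  refine (hasGradientAt_iff_hasFDerivAt.mpr (h.congr_fderiv ?_)).gradient
  ext v
  simp only [ContinuousLinearMap.comp_apply, FunLike.coe_sub, Pi.sub_apply,
    ContinuousLinearMap.id_apply, ContinuousLinearMap.smulRight_apply, innerSL_apply_apply,
    hF.hasGradientAt.fderiv_apply, InnerProductSpace.toDual_apply_apply, inner_sub_left,
    inner_sub_right, real_inner_smul_left, real_inner_smul_right]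
  ring

section CoordMonomial

variable {ι : Type*} [Fintype ι]

def coordMonomial (e : ι → ℕ) (x : EuclideanSpace ℝ ι) : ℝ := ∏ j, x j ^ e j

theorem coordMonomial_add (e f : ι → ℕ) (x : EuclideanSpace ℝ ι) :
    coordMonomial (e + f) x = coordMonomial e x * coordMonomial f x := by
  simp only [coordMonomial, Pi.add_apply, pow_add, Finset.prod_mul_distrib]

theorem integrable_coordMonomial {r : ℝ} (μ : Measure (Metric.sphere (0 : EuclideanSpace ℝ ι) r))
    [IsFiniteMeasure μ] (e : ι → ℕ) :
    Integrable (fun x : Metric.sphere (0 : EuclideanSpace ℝ ι) r => coordMonomial e x) μ := by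
  refine Continuous.integrable_of_hasCompactSupport ?_ (HasCompactSupport.of_compactSpace _)
  unfold coordMonomial
  fun_prop

variable [DecidableEq ι]

theorem coordMonomial_single (i : ι) (x : EuclideanSpace ℝ ι) :
    coordMonomial (Pi.single i 1) x = x i := by
  simp [coordMonomial, Pi.single_apply]

theorem coordMonomial_sub_single (e : ι → ℕ) (i : ι) (x : EuclideanSpace ℝ ι) :
    coordMonomial (e - Pi.single i 1) x
      = x i ^ (e i - 1) * ∏ j ∈ Finset.univ.erase i, x j ^ e j := by
  rw [coordMonomial, ← Finset.mul_prod_erase _ _ (Finset.mem_univ i)]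
  congr 1
  · simp
  · refine Finset.prod_congr rfl fun j hj => ?_
    simp [Finset.ne_of_mem_erase hj]

theorem hasGradientAt_coordMonomial (e : ι → ℕ) (x : EuclideanSpace ℝ ι) :
    HasGradientAt (coordMonomial e)
      (WithLp.toLp 2 fun i => e i * coordMonomial (e - Pi.single i 1) x) x := by
  have h := HasFDerivAt.finsetProd (u := Finset.univ) (x := x) fun i _ =>
    (hasDerivAt_pow (e i) (x i)).comp_hasFDerivAt x (EuclideanSpace.proj (𝕜 := ℝ) i).hasFDerivAt
  refine hasGradientAt_iff_hasFDerivAt.mpr (h.congr_fderiv ?_)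
  ext v
  simp only [EuclideanSpace.coe_proj, Function.comp_apply, sum_apply,
    smul_apply, PiLp.proj_apply, smul_eq_mul, coordMonomial_sub_single,
    InnerProductSpace.toDual_apply_apply, PiLp.inner_apply, RCLike.inner_apply, conj_trivial]
  refine Finset.sum_congr rfl fun i _ => ?_
  ring

theorem gradient_coordMonomial_apply (e : ι → ℕ) (x : EuclideanSpace ℝ ι) (i : ι) :
    gradient (coordMonomial e) x i = e i * coordMonomial (e - Pi.single i 1) x := by
  rw [(hasGradientAt_coordMonomial e x).gradient, PiLp.toLp_apply]

/-- The truncated subtractions agree on both sides as soon as `a i ≠ 0` and `b j ≠ 0`,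
and otherwise both sides vanish. -/
theorem natCast_mul_coordMonomial_sub_single_mul (a b c : ι → ℕ) (i j : ι)
    (x : EuclideanSpace ℝ ι) :
    (a i : ℝ) * b j * (coordMonomial (a - Pi.single i 1) x * coordMonomial (b - Pi.single j 1) x)
        * coordMonomial c x
      = a i * b j * coordMonomial (a + b + c - Pi.single i 1 - Pi.single j 1) x := by
  rcases Nat.eq_zero_or_pos (a i) with ha | ha
  · simp [ha]
  rcases Nat.eq_zero_or_pos (b j) with hb | hb
  · simp [hb]
  rw [mul_assoc, ← coordMonomial_add, ← coordMonomial_add]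
  congr 2
  funext k
  simp only [Pi.add_apply, Pi.sub_apply, Pi.single_apply]
  split_ifs <;> subst_vars <;> omega

end CoordMonomial

theorem inner_cross3 (x u w : E3) :
    ⟪cross3 x u, w⟫ = x 0 * (u 1 * w 2 - u 2 * w 1) + x 1 * (u 2 * w 0 - u 0 * w 2)
      + x 2 * (u 0 * w 1 - u 1 * w 0) := by
  simp only [cross3, WithLp.equiv_symm_apply, PiLp.inner_apply, RCLike.inner_apply, conj_trivial,
    Fin.sum_univ_three, Matrix.cons_val_zero, Matrix.cons_val_one, Matrix.cons_val]
  ring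

theorem inner_cross3_sub_smul_self (x u w : E3) (c d : ℝ) :
    ⟪cross3 x (u - c • x), w - d • x⟫ = ⟪cross3 x u, w⟫ := by
  simp only [inner_cross3, PiLp.sub_apply, PiLp.smul_apply, smul_eq_mul]
  ring

theorem coord_mul_inner_Jop_sgrad_coordMonomial (a b : Fin 3 → ℕ) {x : E3} (hx : ‖x‖ = 1) :
    x 0 * ⟪Jop x (sgrad (coordMonomial a) x), sgrad (coordMonomial b) x⟫ =
      ((a 0 : ℝ) * b 1 - a 1 * b 0) *
          coordMonomial (fun j => a j + b j + (if j = 2 then 1 else 0) - (if j = 1 then 1 else 0)) x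
        + (-(a 0 : ℝ) * b 2 + a 2 * b 0) *
          coordMonomial (fun j => a j + b j + (if j = 1 then 1 else 0) - (if j = 2 then 1 else 0)) x
        + ((a 1 : ℝ) * b 2 - a 2 * b 1) *
          coordMonomial (fun j => a j + b j + (if j = 0 then 2 else 0) - (if j = 0 then 0 else 1)) x := by
  rw [sgrad_eq_of_norm_eq_one (hasGradientAt_coordMonomial a x).differentiableAt hx,
    sgrad_eq_of_norm_eq_one (hasGradientAt_coordMonomial b x).differentiableAt hx, Jop,
    inner_cross3_sub_smul_self, inner_cross3]
  simp only [gradient_coordMonomial_apply]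
  have e₁ : (fun j : Fin 3 => a j + b j + (if j = 2 then 1 else 0) - (if j = 1 then 1 else 0))
      = a + b + (Pi.single 0 1 + Pi.single 2 1) - Pi.single 0 1 - Pi.single 1 1 := by
    ext k; fin_cases k <;> simp
  have e₂ : (fun j : Fin 3 => a j + b j + (if j = 1 then 1 else 0) - (if j = 2 then 1 else 0))
      = a + b + (Pi.single 0 1 + Pi.single 1 1) - Pi.single 0 1 - Pi.single 2 1 := by
    ext k; fin_cases k <;> simp
  have e₃ : (fun j : Fin 3 => a j + b j + (if j = 0 then 2 else 0) - (if j = 0 then 0 else 1))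
      = a + b + (Pi.single 0 1 + Pi.single 0 1) - Pi.single 1 1 - Pi.single 2 1 := by
    ext k; fin_cases k <;> simp
  have term := fun i j c => natCast_mul_coordMonomial_sub_single_mul a b c i j x
  have h01 := term 0 1 (Pi.single 0 1 + Pi.single 2 1)
  have h10 := term 1 0 (Pi.single 0 1 + Pi.single 2 1)
  have h02 := term 0 2 (Pi.single 0 1 + Pi.single 1 1)
  have h20 := term 2 0 (Pi.single 0 1 + Pi.single 1 1)
  have h12 := term 1 2 (Pi.single 0 1 + Pi.single 0 1)
  have h21 := term 2 1 (Pi.single 0 1 + Pi.single 0 1)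
  simp only [coordMonomial_add, coordMonomial_single] at h01 h10 h02 h20 h12 h21
  rw [tsub_right_comm] at h10 h20 h21
  rw [e₁, e₂, e₃]
  linear_combination h12 - h21 + h20 - h02 + h01 - h10

instance : IsFiniteMeasure μS := inferInstanceAs (IsFiniteMeasure (volume : Measure E3).toSphere)

-- The paper's indices `1, 2, 3` are `0, 1, 2 : Fin 3`. A negative exponent is truncated to `0`
-- in `ℕ`, but the coefficient of that term is then `0`.
theorem integral_coord_inner_J_grad_monomials_general (a b : Fin 3 → ℕ) :
    ∫ x : Metric.sphere (0 : E3) 1,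
        ((x : E3) 0) * ⟪Jop x (sgrad (fun y => ∏ i, (y i) ^ (a i)) (x : E3)),
          sgrad (fun y => ∏ i, (y i) ^ (b i)) (x : E3)⟫ ∂μS =
      ((a 0 : ℝ) * (b 1 : ℝ) - (a 1 : ℝ) * (b 0 : ℝ)) *
          (∫ x : Metric.sphere (0 : E3) 1,
            ∏ j, ((x : E3) j) ^
              (a j + b j + (if j = 2 then 1 else 0) - (if j = 1 then 1 else 0)) ∂μS) +
        (-(a 0 : ℝ) * (b 2 : ℝ) + (a 2 : ℝ) * (b 0 : ℝ)) *
          (∫ x : Metric.sphere (0 : E3) 1,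
            ∏ j, ((x : E3) j) ^
              (a j + b j + (if j = 1 then 1 else 0) - (if j = 2 then 1 else 0)) ∂μS) +
        ((a 1 : ℝ) * (b 2 : ℝ) - (a 2 : ℝ) * (b 1 : ℝ)) *
          (∫ x : Metric.sphere (0 : E3) 1,
            ∏ j, ((x : E3) j) ^
              (a j + b j + (if j = 0 then 2 else 0) - (if j = 0 then 0 else 1)) ∂μS) := by
  have hint := integrable_coordMonomial μS
  refine (integral_congr_ae (ae_of_all _ fun x : Metric.sphere (0 : E3) 1 =>
      coord_mul_inner_Jop_sgrad_coordMonomial a b (norm_eq_of_mem_sphere x))).trans ?_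
  rw [integral_add, integral_add, integral_const_mul, integral_const_mul, integral_const_mul]
  · rfl
  · exact (hint _).const_mul _
  · exact (hint _).const_mul _
  · exact ((hint _).const_mul _).add ((hint _).const_mul _)
  · exact (hint _).const_mul _

/-- On the unit 2-sphere, for multi-indices `a, b` with `|a| = |b| = l`,
`∫_{S²} φ₁ ⟨J∇φ^a, ∇φ^b⟩ dM
  = (a₁b₂ − a₂b₁) ∫ φ^{a+b−ε₂+ε₃} + (−a₁b₃ + a₃b₁) ∫ φ^{a+b+ε₂−ε₃}
    + (a₂b₃ − a₃b₂) ∫ φ^{a+b+2ε₁−ε₂−ε₃}`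
(indices `1,2,3` correspond to `0,1,2 : Fin 3`; terms whose multi-index becomes
negative vanish). -/
theorem integral_coord_inner_J_grad_monomials (l : ℕ) (a b : Fin 3 → ℕ)
    (ha : (∑ i, a i) = l) (hb : (∑ i, b i) = l) :
    ∫ x : Metric.sphere (0 : E3) 1,
        ((x : E3) 0) * ⟪Jop x (sgrad (fun y => ∏ i, (y i) ^ (a i)) (x : E3)),
          sgrad (fun y => ∏ i, (y i) ^ (b i)) (x : E3)⟫ ∂μS =
      ((a 0 : ℝ) * (b 1 : ℝ) - (a 1 : ℝ) * (b 0 : ℝ)) *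
          (∫ x : Metric.sphere (0 : E3) 1,
            ∏ j, ((x : E3) j) ^
              (a j + b j + (if j = 2 then 1 else 0) - (if j = 1 then 1 else 0)) ∂μS) +
        (-(a 0 : ℝ) * (b 2 : ℝ) + (a 2 : ℝ) * (b 0 : ℝ)) *
          (∫ x : Metric.sphere (0 : E3) 1,
            ∏ j, ((x : E3) j) ^
              (a j + b j + (if j = 1 then 1 else 0) - (if j = 2 then 1 else 0)) ∂μS) +
        ((a 1 : ℝ) * (b 2 : ℝ) - (a 2 : ℝ) * (b 1 : ℝ)) *
          (∫ x : Metric.sphere (0 : E3) 1,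
            ∏ j, ((x : E3) j) ^
              (a j + b j + (if j = 0 then 2 else 0) - (if j = 0 then 0 else 1)) ∂μS) :=
  integral_coord_inner_J_grad_monomials_general a b
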